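/- Let G be a connected finite simple graph with at least 3 vertices and let T_1, …, T_k (k ≥ 2) be spanning trees of G whose inner-vertex sets I(T_1), …, I(T_k) are pairwise disjoint. Let u and v be distinct vertices and let 1 ≤ i < j ≤ k. If the unique path between u and v in T_i and the unique path between u and v in T_j share a common edge, then it is not the case that both u and v are inner vertices of T_i, and it is not the case that both u and v are inner vertices of T_j. -/

import Mathlib

/-!
Suppose `u` and `v` are both inner in `T i`. Every internal vertex of a path has two neighbours
on it, so then every vertex of the `T i`-path from `u` to `v` is inner in `T i`. The common edge
is an edge of the tree `T j` on at least three vertices, so one of its endpoints is inner in `T j`;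
it lies on the `T i`-path, contradicting the disjointness of `I(T i)` and `I(T j)`.
-/

open SimpleGraph

variable {V : Type*}

/-- `T` is a spanning tree of `G`: a subgraph on all of `V` that is connected and acyclic. -/
def IsSpanningTree (G T : SimpleGraph V) : Prop :=
  T ≤ G ∧ T.Connected ∧ T.IsAcyclic

/-- The set of inner vertices of `T` (degree at least 2). -/
def innerSet (T : SimpleGraph V) : Set V :=
  {v | 2 ≤ (T.neighborSet v).ncard}

/-- Vertices that are inner vertices of at least two trees of the family. -/
def innerMulti {k : ℕ} (T : Fin k → SimpleGraph V) : Set V :=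
  {v | ∃ i j : Fin k, i ≠ j ∧ v ∈ innerSet (T i) ∧ v ∈ innerSet (T j)}

/-- Edges that belong to at least two trees of the family. -/
def edgeMulti {k : ℕ} (T : Fin k → SimpleGraph V) : Set (Sym2 V) :=
  {e | ∃ i j : Fin k, i ≠ j ∧ e ∈ (T i).edgeSet ∧ e ∈ (T j).edgeSet}

/-- A connected dominating set. -/
def IsConnDomSet (G : SimpleGraph V) (D : Set V) : Prop :=
  (G.induce D).Connected ∧ ∀ v ∉ D, ∃ w ∈ D, G.Adj v w

variable {H : SimpleGraph V}

lemma mem_innerSet_of_adj_of_adj [Finite V] {x a b : V} (ha : H.Adj x a) (hb : H.Adj x b)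
    (hab : a ≠ b) : x ∈ innerSet H :=
  (Set.one_lt_ncard (Set.toFinite _)).2 ⟨a, ha, b, hb, hab⟩

lemma SimpleGraph.Walk.IsPath.mem_innerSet [Finite V] {u v x : V} {p : H.Walk u v}
    (hp : p.IsPath) (hx : x ∈ p.support) (hxu : x ≠ u) (hxv : x ≠ v) : x ∈ innerSet H := by
  obtain ⟨i, rfl, hi⟩ := Walk.mem_support_iff_exists_getVert.mp hx
  have hi0 : i ≠ 0 := by rintro rfl; exact hxu p.getVert_zero
  have hil : i < p.length := hi.lt_of_ne (by rintro rfl; exact hxv p.getVert_length)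
  calc 2 = (p.toSubgraph.neighborSet (p.getVert i)).ncard :=
        (hp.ncard_neighborSet_toSubgraph_internal_eq_two hi0 hil).symm
    _ ≤ (H.neighborSet (p.getVert i)).ncard :=
        Set.ncard_le_ncard (p.toSubgraph.neighborSet_subset _) (Set.toFinite _)

lemma SimpleGraph.Walk.IsPath.forall_mem_support_mem_innerSet [Finite V] {u v : V} {p : H.Walk u v}
    (hp : p.IsPath) (hu : u ∈ innerSet H) (hv : v ∈ innerSet H) :
    ∀ x ∈ p.support, x ∈ innerSet H := by
  intro x hx
  by_cases hxu : x = u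
  · exact hxu ▸ hu
  by_cases hxv : x = v
  · exact hxv ▸ hv
  exact hp.mem_innerSet hx hxu hxv

/-- If `a` is a leaf, a path from `a` to a third vertex `c` must leave `a` through `b`,
so `b` is an internal vertex of that path. -/
lemma SimpleGraph.Connected.mem_innerSet_or_mem_innerSet [Fintype V] (hH : H.Connected)
    (hV : 3 ≤ Fintype.card V) {a b : V} (hab : H.Adj a b) :
    a ∈ innerSet H ∨ b ∈ innerSet H := by
  classical
  refine or_iff_not_imp_left.2 fun ha => ?_
  obtain ⟨c, hca, hcb⟩ : ∃ c, c ≠ a ∧ c ≠ b :=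
    ENat.exists_ne_ne_of_three_le (by rw [ENat.card_eq_coe_fintype_card]; exact_mod_cast hV) a b
  obtain ⟨p, hp⟩ := (hH.preconnected a c).some.toPath
  have hnil : ¬ p.Nil := Walk.not_nil_of_ne hca.symm
  have hsnd : p.snd = b := by
    by_contra hne
    exact ha (mem_innerSet_of_adj_of_adj (Walk.adj_snd hnil) hab hne)
  have hb : b ∈ p.support := hsnd ▸ p.getVert_mem_support 1
  exact hp.mem_innerSet hb hab.ne' hcb.symm

lemma SimpleGraph.Walk.IsPath.not_endpoints_mem_innerSet [Fintype V] {u v : V} {p : H.Walk u v}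
    (hp : p.IsPath) {K : SimpleGraph V} (hK : K.Connected) (hV : 3 ≤ Fintype.card V)
    (hHK : Disjoint (innerSet H) (innerSet K)) {e : Sym2 V} (hep : e ∈ p.edges)
    (heK : e ∈ K.edgeSet) :
    ¬ (u ∈ innerSet H ∧ v ∈ innerSet H) := by
  induction e using Sym2.ind with
  | h a b =>
    rintro ⟨hu, hv⟩
    have hsupp := hp.forall_mem_support_mem_innerSet hu hv
    rcases hK.mem_innerSet_or_mem_innerSet hV heK with ha | hb
    · exact hHK.notMem_of_mem_right ha (hsupp a (p.fst_mem_support_of_mem_edges hep))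
    · exact hHK.notMem_of_mem_right hb (hsupp b (p.snd_mem_support_of_mem_edges hep))

theorem common_edge_not_both_inner_general [Fintype V] (G : SimpleGraph V)
    (hV : 3 ≤ Fintype.card V) (k : ℕ)
    (T : Fin k → SimpleGraph V) (hT : ∀ m, IsSpanningTree G (T m))
    (hdisj : ∀ m m' : Fin k, m ≠ m' → Disjoint (innerSet (T m)) (innerSet (T m')))
    (u v : V) (i j : Fin k) (hij : i < j)
    (p : (T i).Walk u v) (hp : p.IsPath) (q : (T j).Walk u v) (hq : q.IsPath)
    (hshare : ∃ e : Sym2 V, e ∈ p.edges ∧ e ∈ q.edges) :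
    ¬ (u ∈ innerSet (T i) ∧ v ∈ innerSet (T i)) ∧
    ¬ (u ∈ innerSet (T j) ∧ v ∈ innerSet (T j)) := by
  obtain ⟨e, hep, heq⟩ := hshare
  exact ⟨hp.not_endpoints_mem_innerSet (hT j).2.1 hV (hdisj i j hij.ne) hep
      (q.edges_subset_edgeSet heq),
    hq.not_endpoints_mem_innerSet (hT i).2.1 hV (hdisj j i hij.ne') heq
      (p.edges_subset_edgeSet hep)⟩

/-- If the unique `u`-`v` paths in two of the trees share an edge, then `u` and `v`
are not both inner vertices of `T i`, nor both inner vertices of `T j`. -/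
theorem common_edge_not_both_inner [Fintype V] (G : SimpleGraph V) (hG : G.Connected)
    (hV : 3 ≤ Fintype.card V) (k : ℕ) (hk : 2 ≤ k)
    (T : Fin k → SimpleGraph V) (hT : ∀ m, IsSpanningTree G (T m))
    (hdisj : ∀ m m' : Fin k, m ≠ m' → Disjoint (innerSet (T m)) (innerSet (T m')))
    (u v : V) (huv : u ≠ v) (i j : Fin k) (hij : i < j)
    (p : (T i).Walk u v) (hp : p.IsPath) (q : (T j).Walk u v) (hq : q.IsPath)
    (hshare : ∃ e : Sym2 V, e ∈ p.edges ∧ e ∈ q.edges) :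
    ¬ (u ∈ innerSet (T i) ∧ v ∈ innerSet (T i)) ∧
    ¬ (u ∈ innerSet (T j) ∧ v ∈ innerSet (T j)) :=
  common_edge_not_both_inner_general G hV k T hT hdisj u v i j hij p hp q hq hshare
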